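/- Explicit Berry-connection matrix in the 1D avoided-crossing model: let δ > 0, E(x) := √(x² + δ²), and let Θ(x) := (2(1 + x/E(x)))^{-1/2} · [[1 + x/E(x), δ/E(x)],[−δ/E(x), 1 + x/E(x)]]. Then for all x, p ∈ ℝ: p·Θ′(x)·Θ(x)ᵀ = [[0, −pδ/(2(x²+δ²))],[pδ/(2(x²+δ²)), 0]]; in particular the diagonal entries b⁺, b⁻ vanish identically and bⁱ(x,p) = −pδ/(2(x²+δ²)). -/

import Mathlib

/-!
The frame `Θ(x)` is the rotation matrix by the angle `θ(x) = π/4 - arctan(x/δ)/2`: with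
`φ = 2θ` one has `(cos φ, sin φ) = (x, δ)/E`, and the half-angle identities
`1 + cos φ = 2 cos² θ`, `sin φ = 2 sin θ cos θ` turn the normalised matrix defining `Θ`
into `[[cos θ, sin θ], [-sin θ, cos θ]]`. For any rotation `R(θ(x))` one has
`R' Rᵀ = θ' · [[0, 1], [-1, 0]]`, and `θ' = -δ / (2(x² + δ²))`.
-/

open Matrix

/-- The diagonalizing frame for the 1D avoided-crossing model `u(x) = x`, `v ≡ δ`,
with `E(x) = √(x² + δ²)`:
`Θ(x) = (2(1 + x/E))^{-1/2} · [[1 + x/E, δ/E],[−δ/E, 1 + x/E]]` (a real matrix). -/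
noncomputable def Theta1D (δ x : ℝ) : Matrix (Fin 2) (Fin 2) ℝ :=
  let E : ℝ := Real.sqrt (x ^ 2 + δ ^ 2)
  (Real.sqrt (2 * (1 + x / E)))⁻¹ •
    !![1 + x / E, δ / E; -(δ / E), 1 + x / E]

open Real

noncomputable def rotationMatrix (θ : ℝ) : Matrix (Fin 2) (Fin 2) ℝ :=
  !![cos θ, sin θ; -sin θ, cos θ]

theorem rotationMatrix_eq_smul_of_cos_pos {θ : ℝ} (hθ : 0 < cos θ) :
    rotationMatrix θ = (√(2 * (1 + cos (2 * θ))))⁻¹ •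
      !![1 + cos (2 * θ), sin (2 * θ); -sin (2 * θ), 1 + cos (2 * θ)] := by
  have hsqrt : √(2 * (1 + cos (2 * θ))) = 2 * cos θ := by
    rw [cos_two_mul, show 2 * (1 + (2 * cos θ ^ 2 - 1)) = (2 * cos θ) ^ 2 by ring]
    exact sqrt_sq (by positivity)
  rw [hsqrt, cos_two_mul, sin_two_mul]
  ext i j
  fin_cases i <;> fin_cases j <;> simp [rotationMatrix, field]

theorem deriv_rotationMatrix_mul_transpose {θ : ℝ → ℝ} {θ' x : ℝ} (hθ : HasDerivAt θ θ' x) :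
    (of fun k l => deriv (fun s => rotationMatrix (θ s) k l) x) * (rotationMatrix (θ x))ᵀ =
      θ' • !![0, 1; -1, 0] := by
  have hcos : deriv (fun s => cos (θ s)) x = -sin (θ x) * θ' := hθ.cos.deriv
  have hsin : deriv (fun s => sin (θ s)) x = cos (θ x) * θ' := hθ.sin.deriv
  have hnsin : deriv (fun s => -sin (θ s)) x = -(cos (θ x) * θ') := hθ.sin.neg.deriv
  ext i j
  fin_cases i <;> fin_cases j <;>
    simp only [rotationMatrix, of_apply, cons_val', cons_val_fin_one, cons_val_zero, cons_val_one,
      Fin.zero_eta, Fin.mk_one, Fin.isValue, Matrix.mul_apply, transpose_apply, Fin.sum_univ_two,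
      hcos, hsin, hnsin, Matrix.smul_apply, smul_eq_mul, mul_zero, mul_one, mul_neg, neg_mul, neg_neg]
  · ring
  · linear_combination θ' * sin_sq_add_cos_sq (θ x)
  · linear_combination -θ' * sin_sq_add_cos_sq (θ x)
  · ring

noncomputable def frameAngle (δ x : ℝ) : ℝ := π / 4 - arctan (x / δ) / 2

theorem hasDerivAt_frameAngle {δ : ℝ} (hδ : δ ≠ 0) (x : ℝ) :
    HasDerivAt (frameAngle δ) (-(δ / (2 * (x ^ 2 + δ ^ 2)))) x := by
  refine ((((hasDerivAt_id' x).div_const δ).arctan.div_const 2).const_sub (π / 4)).congr_deriv ?_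
  field_simp
  ring

theorem cos_frameAngle_pos (δ x : ℝ) : 0 < cos (frameAngle δ x) := by
  have hlt := arctan_lt_pi_div_two (x / δ)
  have hgt := neg_pi_div_two_lt_arctan (x / δ)
  exact cos_pos_of_mem_Ioo ⟨by unfold frameAngle; linarith, by unfold frameAngle; linarith⟩

theorem sqrt_one_add_div_sq {δ : ℝ} (hδ : 0 < δ) (x : ℝ) :
    √(1 + (x / δ) ^ 2) = √(x ^ 2 + δ ^ 2) / δ := by
  rw [show 1 + (x / δ) ^ 2 = (x ^ 2 + δ ^ 2) / δ ^ 2 by field_simp; ring,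
    sqrt_div' _ (by positivity), sqrt_sq hδ.le]

theorem cos_two_mul_frameAngle {δ : ℝ} (hδ : 0 < δ) (x : ℝ) :
    cos (2 * frameAngle δ x) = x / √(x ^ 2 + δ ^ 2) := by
  rw [frameAngle, show 2 * (π / 4 - arctan (x / δ) / 2) = π / 2 - arctan (x / δ) by ring,
    cos_pi_div_two_sub, sin_arctan, sqrt_one_add_div_sq hδ]
  field_simp

theorem sin_two_mul_frameAngle {δ : ℝ} (hδ : 0 < δ) (x : ℝ) :
    sin (2 * frameAngle δ x) = δ / √(x ^ 2 + δ ^ 2) := by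
  rw [frameAngle, show 2 * (π / 4 - arctan (x / δ) / 2) = π / 2 - arctan (x / δ) by ring,
    sin_pi_div_two_sub, cos_arctan, sqrt_one_add_div_sq hδ]
  field_simp

theorem theta1D_eq_rotationMatrix {δ : ℝ} (hδ : 0 < δ) (x : ℝ) :
    Theta1D δ x = rotationMatrix (frameAngle δ x) := by
  rw [rotationMatrix_eq_smul_of_cos_pos (cos_frameAngle_pos δ x), cos_two_mul_frameAngle hδ,
    sin_two_mul_frameAngle hδ, Theta1D]

/-- Explicit Berry-connection matrix in the 1D avoided-crossing model:
for `δ > 0` and all `x, p ∈ ℝ`,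
`p·Θ′(x)·Θ(x)ᵀ = [[0, −pδ/(2(x²+δ²))],[pδ/(2(x²+δ²)), 0]]`;
in particular `b⁺ = b⁻ = 0` and `bⁱ(x,p) = −pδ/(2(x²+δ²))`. -/
theorem berry_connection_1d (δ : ℝ) (hδ : 0 < δ) (x p : ℝ) :
    p • (Matrix.of fun k l => deriv (fun s => Theta1D δ s k l) x) * (Theta1D δ x)ᵀ =
      !![0, -(p * δ / (2 * (x ^ 2 + δ ^ 2)));
         p * δ / (2 * (x ^ 2 + δ ^ 2)), 0] := by
  have hΘ : Theta1D δ = fun s => rotationMatrix (frameAngle δ s) :=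
    funext (theta1D_eq_rotationMatrix hδ)
  rw [hΘ, smul_mul, deriv_rotationMatrix_mul_transpose (hasDerivAt_frameAngle hδ.ne' x)]
  ext i j
  fin_cases i <;> fin_cases j <;> simp [field]
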